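/- The family (f_g)_{g≥1} is a ℚ-basis of the subspace of symmetric Laurent polynomials: for every G ∈ ℚ[q,q⁻¹] with ι(G) = G there exist rational numbers a_g, all but finitely many equal to zero, such that G = Σ_{g≥1} a_g f_g(q), and these a_g are uniquely determined by G. -/

import Mathlib

/-!
Put `u = q + 2 + q⁻¹`, so that `f_{k+1} = u ^ k`. Since `u ^ k` has top term `q ^ k`, a polynomial
`P(u)` has coefficient `lead P` at `q ^ (deg P)`; hence `u` is transcendental and its powers are
linearly independent. Conversely `q ^ n + q ^ (-n) = D_n(u - 2)` for the Dickson polynomial `D_n`,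
so `G + ι G` is a polynomial in `u` for every `G`, and a symmetric `G` is half of it.
-/

open LaurentPolynomial

noncomputable section

def fL (g : ℕ) : LaurentPolynomial ℚ := T (1 - (g : ℤ)) * (1 + T 1) ^ (2 * g - 2)

open Polynomial in
lemma Polynomial.aeval_mem_span_range_pow {R A : Type*} [CommSemiring R] [Semiring A]
    [Algebra R A] (x : A) (P : R[X]) : aeval x P ∈ Submodule.span R (Set.range (x ^ ·)) := by
  rw [aeval_eq_sum_range]
  exact Submodule.sum_mem _ fun i _ ↦ Submodule.smul_mem _ _ (Submodule.subset_span ⟨i, rfl⟩)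

namespace SymmetricLaurent

section Semiring

variable (R : Type*) [Semiring R]

def u : R[T;T⁻¹] := T 1 + 2 + T (-1)

variable {R}

lemma coeff_mul_T (f : R[T;T⁻¹]) (n m : ℤ) : (f * T n).coeff m = f.coeff (m - n) := by
  rw [T, AddMonoidAlgebra.coeff_mul_single_apply, mul_one, sub_eq_add_neg]

lemma coeff_mul_u (f : R[T;T⁻¹]) (m : ℤ) :
    (f * u R).coeff m = f.coeff (m - 1) + 2 * f.coeff m + f.coeff (m + 1) := by
  simp only [u, mul_add, mul_two, AddMonoidAlgebra.coeff_add, Finsupp.add_apply, coeff_mul_T,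
    sub_neg_eq_add, two_mul]

lemma coeff_u_pow_of_lt {k : ℕ} {m : ℤ} (h : k < m) : (u R ^ k).coeff m = 0 := by
  induction k generalizing m with
  | zero => rw [pow_zero, ← T_zero, T_apply, if_neg (by omega)]
  | succ k ih =>
    rw [pow_succ, coeff_mul_u, ih (by omega), ih (by omega), ih (by omega)]
    simp

lemma coeff_u_pow_self (k : ℕ) : (u R ^ k).coeff k = 1 := by
  induction k with
  | zero => simp
  | succ k ih =>
    rw [pow_succ, coeff_mul_u, Nat.cast_succ, add_sub_cancel_right, ih,
      coeff_u_pow_of_lt (by omega), coeff_u_pow_of_lt (by omega)]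
    simp

end Semiring

section CommRing

variable {R : Type*} [CommRing R]

open Polynomial in
lemma coeff_aeval_u_natDegree (P : R[X]) :
    (aeval (u R) P).coeff P.natDegree = P.leadingCoeff := by
  rw [aeval_eq_sum_range, AddMonoidAlgebra.coeff_sum, Finsupp.finsetSum_apply,
    Finset.sum_eq_single_of_mem _ (Finset.self_mem_range_succ _)]
  · rw [AddMonoidAlgebra.coeff_smul_apply, coeff_u_pow_self, smul_eq_mul, mul_one]
    rfl
  · intro i hi _
    have hlt : (i : ℤ) < P.natDegree := by
      rw [Finset.mem_range] at hi
      omega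
    rw [AddMonoidAlgebra.coeff_smul_apply, coeff_u_pow_of_lt hlt, smul_zero]

lemma transcendental_u : Transcendental R (u R) :=
  transcendental_iff.2 fun P hP ↦ Polynomial.leadingCoeff_eq_zero.1 <| by
    rw [← coeff_aeval_u_natDegree, hP, AddMonoidAlgebra.coeff_zero, Finsupp.zero_apply]

lemma linearIndependent_u_pow : LinearIndependent R (u R ^ ·) := by
  have := (Polynomial.basisMonomials R).linearIndependent.map'
    (Polynomial.aeval (u R)).toLinearMap
    (LinearMap.ker_eq_bot.2 (transcendental_iff_injective.1 transcendental_u))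
  simpa [Function.comp_def] using this

lemma T_add_T_neg_mem_range (n : ℤ) :
    T n + T (-n) ∈ (Polynomial.aeval (R := R) (u R)).range := by
  suffices h : ∀ k : ℕ, T k + T (-k) ∈ (Polynomial.aeval (R := R) (u R)).range by
    obtain ⟨k, rfl | rfl⟩ := Int.eq_nat_or_neg n
    · exact h k
    · rw [neg_neg, add_comm]
      exact h k
  intro k
  refine ⟨(Polynomial.dickson 1 (1 : R) k).comp (Polynomial.X - 2), ?_⟩
  have hu : u R - 2 = T 1 + T (-1) := by rw [u]; ring
  have hT : (T 1 : R[T;T⁻¹]) * T (-1) = 1 := by rw [← T_add, add_neg_cancel, T_zero]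
  rw [AlgHom.toRingHom_eq_coe, RingHom.coe_coe, Polynomial.aeval_comp]
  simp only [map_sub, Polynomial.aeval_X, map_ofNat, hu]
  rw [← Polynomial.eval_map_algebraMap, Polynomial.map_dickson, map_one,
    Polynomial.dickson_one_one_eval_add_inv _ _ hT, T_pow, T_pow, mul_one, mul_neg_one]

lemma add_invert_mem_range (f : R[T;T⁻¹]) :
    f + invert f ∈ (Polynomial.aeval (R := R) (u R)).range := by
  induction f using LaurentPolynomial.induction_on' with
  | add p q hp hq => simpa [add_add_add_comm] using add_mem hp hq
  | C_mul_T n a =>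
    rw [map_mul, invert_C, invert_T, ← mul_add, C_eq_algebraMap, ← Algebra.smul_def]
    exact Subalgebra.smul_mem _ (T_add_T_neg_mem_range n) a

lemma mem_range_of_invert_eq [Invertible (2 : R)] {f : R[T;T⁻¹]} (hf : invert f = f) :
    f ∈ (Polynomial.aeval (R := R) (u R)).range := by
  have := Subalgebra.smul_mem _ (add_invert_mem_range f) (⅟2 : R)
  rwa [hf, ← two_smul R, smul_smul, invOf_mul_self, one_smul] at this

end CommRing

end SymmetricLaurent

open SymmetricLaurent

lemma fL_succ (k : ℕ) : fL (k + 1) = u ℚ ^ k := by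
  have hT : (T (-1) : LaurentPolynomial ℚ) * T 1 = 1 := by rw [← T_add, neg_add_cancel, T_zero]
  have hu : u ℚ = T (-1) * (1 + T 1) ^ 2 := by
    rw [u]
    linear_combination (-(2 + T 1 : LaurentPolynomial ℚ)) * hT
  rw [fL, hu, mul_pow, ← pow_mul, T_pow]
  congr 2
  push_cast
  omega

lemma fL_comp_succ : fL ∘ Nat.succ = (u ℚ ^ ·) := funext fL_succ

lemma setOf_one_le_eq_range_succ : {g : ℕ | 1 ≤ g} = Set.range Nat.succ := Nat.range_succ.symm

lemma linearIndepOn_fL : LinearIndepOn ℚ fL {g | 1 ≤ g} := by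
  rw [setOf_one_le_eq_range_succ, linearIndepOn_range_iff Nat.succ_injective, fL_comp_succ]
  exact linearIndependent_u_pow

lemma mem_span_fL_of_invert_eq {G : LaurentPolynomial ℚ} (hG : invert G = G) :
    G ∈ Submodule.span ℚ (fL '' {g | 1 ≤ g}) := by
  rw [setOf_one_le_eq_range_succ, ← Set.range_comp, fL_comp_succ]
  obtain ⟨P, rfl⟩ := mem_range_of_invert_eq hG
  exact Polynomial.aeval_mem_span_range_pow _ P

/-- The family `(f_g)_{g ≥ 1}` is a `ℚ`-basis of the space of symmetric Laurent
polynomials: every `G ∈ ℚ[q,q⁻¹]` with `ι(G) = G` (where `ι` is the `ℚ`-algebra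
automorphism with `ι(q) = q⁻¹`, i.e. `LaurentPolynomial.invert`) can be written
uniquely as a finitely supported sum `G = ∑_{g ≥ 1} a_g • f_g`. -/
theorem stmt2 (G : LaurentPolynomial ℚ) (hG : invert G = G) :
    ∃! a : ℕ →₀ ℚ, (∀ g ∈ a.support, 1 ≤ g) ∧ G = a.sum fun g c => c • fL g := by
  obtain ⟨a, ha, rfl⟩ :=
    (Finsupp.mem_span_image_iff_linearCombination ℚ).1 (mem_span_fL_of_invert_eq hG)
  exact ⟨a, ⟨ha, rfl⟩, fun b ⟨hb, hba⟩ ↦ linearIndepOn_iffₛ.1 linearIndepOn_fL b hb a ha hba.symm⟩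

end
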